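/- For a table φ_1, …, φ_n with MISO point w, for each index j let φ^(j) be the table after the MISO update with index j and w^(j) the recomputed MISO point. Then the expected one-step descent in the average Euclidean distance satisfies (1/n)∑_{j=1}^n [(1/n)∑_{i=1}^n ‖w^(j) − φ_i^(j)‖] ≤ (1 − μ/((μ + L)n)) · (1/n)∑_{i=1}^n ‖w − φ_i‖. -/

import Mathlib

/-!
Replacing `φ_j` by the MISO point `w` moves the MISO point by
`(1/n) ((w - φ_j) - L⁻¹ (∇f_j w - ∇f_j φ_j))`. For a `μ`-strongly convex, `L`-smooth function the
co-coercivity inequality `μL ‖x - y‖² + ‖∇f x - ∇f y‖² ≤ (μ + L) ⟪∇f x - ∇f y, x - y⟫` (obtained by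
applying the Baillon–Haddad argument to the convex function `f - μ/2 ‖·‖²`) makes the gradient
step `x ↦ x - L⁻¹ ∇f x` an `L/(μ + L)`-contraction, so the MISO point moves by at most
`L/((μ + L) n) ‖w - φ_j‖`. In the new distance sum the term `‖w - φ_j‖` disappears, since the
`j`-th entry is now `w`, while each of the `n` terms grows by at most that displacement: a net
decrease of `μ/(μ + L) ‖w - φ_j‖`. Averaging over `j` gives the factor `1 - μ/((μ + L) n)`.
-/

open scoped RealInnerProductSpace

/-- The MISO point associated with a table `φ`. -/
noncomputable def misoW (d n : ℕ) (L : ℝ)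
    (f' : Fin n → EuclideanSpace ℝ (Fin d) → EuclideanSpace ℝ (Fin d))
    (φ : Fin n → EuclideanSpace ℝ (Fin d)) : EuclideanSpace ℝ (Fin d) :=
  (1 / (n : ℝ)) • ∑ i, φ i - (1 / (L * n)) • ∑ i, f' i (φ i)

open Finset Function

theorem sum_update_eq_sum_add_sub {ι M : Type*} [Fintype ι] [DecidableEq ι] [AddCommGroup M]
    (g : ι → M) (j : ι) (b : M) : ∑ i, update g j b i = ∑ i, g i + (b - g j) := by
  rw [sum_update_of_mem (mem_univ j), sum_sdiff_eq_sub (subset_univ _), sum_singleton]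
  abel

theorem sum_norm_sub_update_le {ι F : Type*} [Fintype ι] [DecidableEq ι]
    [SeminormedAddCommGroup F] (φ : ι → F) (j : ι) (w w' : F) :
    ∑ i, ‖w' - update φ j w i‖ ≤ Fintype.card ι * ‖w' - w‖ + (∑ i, ‖w - φ i‖ - ‖w - φ j‖) := by
  have hsplit : ∑ i, ‖w - update φ j w i‖ = ∑ i, ‖w - φ i‖ - ‖w - φ j‖ := by
    simp_rw [apply_update (fun _ v => ‖w - v‖) φ j w, sum_update_eq_sum_add_sub, sub_self,
      norm_zero, zero_sub, ← sub_eq_add_neg]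
  calc ∑ i, ‖w' - update φ j w i‖ ≤ ∑ i, (‖w' - w‖ + ‖w - update φ j w i‖) :=
        sum_le_sum fun i _ => norm_sub_le_norm_sub_add_norm_sub _ _ _
    _ = _ := by rw [sum_add_distrib, hsplit, sum_const, card_univ, nsmul_eq_mul]

section Gradient

variable {E : Type*} [NormedAddCommGroup E] [InnerProductSpace ℝ E]

theorem norm_sub_sq_le_mul_inner_sub_of_convex {g : E → ℝ} {g' : E → E} {M : ℝ} (hM : 0 < M)
    (hconv : ∀ a b, g a + ⟪g' a, b - a⟫ ≤ g b)
    (hupper : ∀ a b, g b ≤ g a + ⟪g' a, b - a⟫ + M / 2 * ‖b - a‖ ^ 2) (a b : E) :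
    ‖g' a - g' b‖ ^ 2 ≤ M * ⟪g' a - g' b, a - b⟫ := by
  -- evaluate the tangent plane at `a` and the quadratic model at `b` at `b - M⁻¹ (g' b - g' a)`,
  -- the minimiser of their difference
  have one_sided : ∀ a b, g a + ⟪g' a, b - a⟫ + M⁻¹ / 2 * ‖g' b - g' a‖ ^ 2 ≤ g b := by
    intro a b
    set D := g' b - g' a
    have h1 := hconv a (b - M⁻¹ • D)
    have h2 := hupper b (b - M⁻¹ • D)
    rw [sub_sub_cancel_left, inner_neg_right, inner_smul_right, norm_neg, norm_smul,
      Real.norm_of_nonneg (inv_nonneg.2 hM.le)] at h2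
    rw [sub_right_comm, inner_sub_right, inner_smul_right] at h1
    have hD : M⁻¹ * ⟪g' b, D⟫ - M⁻¹ * ⟪g' a, D⟫ = M⁻¹ * ‖D‖ ^ 2 := by
      rw [← mul_sub, ← inner_sub_left, real_inner_self_eq_norm_sq]
    have hsq : M / 2 * (M⁻¹ * ‖D‖) ^ 2 = M⁻¹ / 2 * ‖D‖ ^ 2 := by field_simp
    linarith
  have hab := one_sided a b
  have hba := one_sided b a
  rw [norm_sub_rev] at hab
  have hinner : ⟪g' a - g' b, a - b⟫ = -⟪g' a, b - a⟫ - ⟪g' b, a - b⟫ := by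
    rw [inner_sub_left, ← neg_sub b a, inner_neg_right]
  have hcoco : M⁻¹ * ‖g' a - g' b‖ ^ 2 ≤ ⟪g' a - g' b, a - b⟫ := by linarith
  rw [inv_mul_le_iff₀ hM] at hcoco
  exact hcoco

variable [CompleteSpace E] {f : E → ℝ} {f' : E → E} {μ L : ℝ}

theorem hasDerivAt_comp_add_smul (hgrad : ∀ x, HasGradientAt f (f' x) x) (x v : E) (t : ℝ) :
    HasDerivAt (fun t : ℝ => f (x + t • v)) ⟪f' (x + t • v), v⟫ t := by
  have hline : HasDerivAt (fun t : ℝ => x + t • v) v t := by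
    simpa using ((hasDerivAt_id t).smul_const v).const_add x
  exact (hgrad (x + t • v)).hasFDerivAt.comp_hasDerivAt t hline

theorem le_add_inner_add_sq_of_lipschitz_gradient (hgrad : ∀ x, HasGradientAt f (f' x) x)
    (hsmooth : ∀ x y, ‖f' x - f' y‖ ≤ L * ‖x - y‖) (x y : E) :
    f y ≤ f x + ⟪f' x, y - x⟫ + L / 2 * ‖y - x‖ ^ 2 := by
  set v := y - x
  -- the gap between the quadratic model and `f` along the segment from `x` to `y` is antitone
  let g : ℝ → ℝ := fun t => f (x + t • v) - t * ⟪f' x, v⟫ - L / 2 * ‖v‖ ^ 2 * t ^ 2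
  have hg : ∀ t, HasDerivAt g (⟪f' (x + t • v), v⟫ - ⟪f' x, v⟫ - L * ‖v‖ ^ 2 * t) t := by
    intro t
    have h := ((hasDerivAt_comp_add_smul hgrad x v t).sub
      ((hasDerivAt_id' t).mul_const ⟪f' x, v⟫)).sub
      ((hasDerivAt_pow 2 t).const_mul (L / 2 * ‖v‖ ^ 2))
    exact h.congr_deriv (by push_cast; ring)
  have hg_nonpos : ∀ t ∈ interior (Set.Ici (0 : ℝ)),
      ⟪f' (x + t • v), v⟫ - ⟪f' x, v⟫ - L * ‖v‖ ^ 2 * t ≤ 0 := by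
    intro t ht
    rw [interior_Ici] at ht
    have : ⟪f' (x + t • v), v⟫ - ⟪f' x, v⟫ ≤ L * ‖v‖ ^ 2 * t :=
      calc ⟪f' (x + t • v), v⟫ - ⟪f' x, v⟫ = ⟪f' (x + t • v) - f' x, v⟫ :=
            (inner_sub_left _ _ _).symm
        _ ≤ ‖f' (x + t • v) - f' x‖ * ‖v‖ := real_inner_le_norm _ _
        _ ≤ L * ‖t • v‖ * ‖v‖ := by gcongr; simpa using hsmooth (x + t • v) x
        _ = L * ‖v‖ ^ 2 * t := by rw [norm_smul, Real.norm_of_nonneg ht.le]; ring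
    linarith
  have hanti := antitoneOn_of_hasDerivWithinAt_nonpos (convex_Ici 0)
    (fun t _ => (hg t).continuousAt.continuousWithinAt) (fun t _ => (hg t).hasDerivWithinAt)
    hg_nonpos Set.self_mem_Ici (Set.mem_Ici.2 zero_le_one) zero_le_one
  simp only [g, v, zero_smul, add_zero, one_smul, add_sub_cancel] at hanti
  linarith

theorem mul_norm_sq_add_norm_sq_le_mul_inner_of_strongConvex (hgrad : ∀ x, HasGradientAt f (f' x) x)
    (hsmooth : ∀ x y, ‖f' x - f' y‖ ≤ L * ‖x - y‖)
    (hsc : ∀ x y, f x ≥ f y + ⟪f' y, x - y⟫ + μ / 2 * ‖x - y‖ ^ 2)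
    (hμ : 0 ≤ μ) (hμL : μ ≤ L) (x y : E) :
    μ * L * ‖x - y‖ ^ 2 + ‖f' x - f' y‖ ^ 2 ≤ (μ + L) * ⟪f' x - f' y, x - y⟫ := by
  rcases hμL.eq_or_lt with rfl | hlt
  · have hmono : μ * ‖x - y‖ ^ 2 ≤ ⟪f' x - f' y, x - y⟫ := by
      have h1 := hsc x y
      have h2 := hsc y x
      rw [← neg_sub x y, inner_neg_right, norm_neg] at h2
      rw [inner_sub_left]
      linarith
    have hlip : ‖f' x - f' y‖ ^ 2 ≤ μ ^ 2 * ‖x - y‖ ^ 2 := by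
      rw [← mul_pow]
      exact pow_le_pow_left₀ (norm_nonneg _) (hsmooth x y) 2
    nlinarith
  -- `f - μ/2 ‖·‖²` is convex with `(L - μ)`-Lipschitz gradient
  have hgap : ∀ a b, (f b - μ / 2 * ‖b‖ ^ 2) - (f a - μ / 2 * ‖a‖ ^ 2)
      - ⟪f' a - μ • a, b - a⟫ = f b - f a - ⟪f' a, b - a⟫ - μ / 2 * ‖b - a‖ ^ 2 := by
    intro a b
    simp only [inner_sub_left, inner_sub_right, real_inner_smul_left, norm_sub_sq_real,
      real_inner_self_eq_norm_sq]
    rw [real_inner_comm a b]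
    ring
  have hconv : ∀ a b, (f a - μ / 2 * ‖a‖ ^ 2) + ⟪f' a - μ • a, b - a⟫
      ≤ f b - μ / 2 * ‖b‖ ^ 2 := fun a b => by linarith [hsc b a, hgap a b]
  have hupper : ∀ a b, f b - μ / 2 * ‖b‖ ^ 2 ≤ (f a - μ / 2 * ‖a‖ ^ 2)
      + ⟪f' a - μ • a, b - a⟫ + (L - μ) / 2 * ‖b - a‖ ^ 2 := fun a b => by
    linarith [le_add_inner_add_sq_of_lipschitz_gradient hgrad hsmooth a b, hgap a b]
  have hcoco := norm_sub_sq_le_mul_inner_sub_of_convex (sub_pos.2 hlt) hconv hupper x y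
  have hdiff : f' x - μ • x - (f' y - μ • y) = (f' x - f' y) - μ • (x - y) := by
    rw [smul_sub]; abel
  rw [hdiff] at hcoco
  set u := f' x - f' y
  set v := x - y
  clear_value u v
  rw [norm_sub_sq_real, inner_sub_left, real_inner_smul_right, real_inner_smul_left,
    real_inner_self_eq_norm_sq, norm_smul, Real.norm_of_nonneg hμ] at hcoco
  linear_combination hcoco

theorem norm_sub_sub_smul_sub_le_of_strongConvex (hgrad : ∀ x, HasGradientAt f (f' x) x)
    (hsmooth : ∀ x y, ‖f' x - f' y‖ ≤ L * ‖x - y‖)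
    (hsc : ∀ x y, f x ≥ f y + ⟪f' y, x - y⟫ + μ / 2 * ‖x - y‖ ^ 2)
    (hμ : 0 ≤ μ) (hμL : μ ≤ L) (hL : 0 < L) (x y : E) :
    ‖(x - y) - (1 / L) • (f' x - f' y)‖ ≤ L / (μ + L) * ‖x - y‖ := by
  have hco := mul_norm_sq_add_norm_sq_le_mul_inner_of_strongConvex hgrad hsmooth hsc hμ hμL x y
  set p := ⟪f' x - f' y, x - y⟫
  set q := ‖f' x - f' y‖ ^ 2
  set r := ‖x - y‖ ^ 2
  have hs : 0 < μ + L := by linarith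
  have hexpand : ‖(x - y) - (1 / L) • (f' x - f' y)‖ ^ 2 = r - 2 / L * p + q / L ^ 2 := by
    rw [norm_sub_sq_real, real_inner_smul_right, norm_smul, real_inner_comm, mul_pow,
      Real.norm_of_nonneg (by positivity)]
    field_simp
    ring
  have hq : 0 ≤ q := by positivity
  have hr : 0 ≤ r := by positivity
  refine le_of_sq_le_sq ?_ (by positivity)
  calc ‖(x - y) - (1 / L) • (f' x - f' y)‖ ^ 2 = (L ^ 2 * r - 2 * L * p + q) / L ^ 2 := by
        rw [hexpand]; field_simp
    _ ≤ L ^ 2 * r / (μ + L) ^ 2 := by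
        rw [div_le_div_iff₀ (by positivity) (by positivity)]
        nlinarith [mul_le_mul_of_nonneg_left hco (by positivity : 0 ≤ 2 * L * (μ + L)),
          mul_nonneg (mul_nonneg hs.le (sub_nonneg.2 hμL)) hq,
          mul_nonneg (by positivity : 0 ≤ μ ^ 2 * L ^ 2) hr]
    _ = (L / (μ + L) * ‖x - y‖) ^ 2 := by rw [mul_pow, div_pow, mul_div_right_comm]

end Gradient

theorem misoW_update_sub (d n : ℕ) (L : ℝ)
    (f' : Fin n → EuclideanSpace ℝ (Fin d) → EuclideanSpace ℝ (Fin d))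
    (φ : Fin n → EuclideanSpace ℝ (Fin d)) (j : Fin n) (v : EuclideanSpace ℝ (Fin d)) :
    misoW d n L f' (update φ j v) - misoW d n L f' φ
      = (1 / (n : ℝ)) • ((v - φ j) - (1 / L) • (f' j v - f' j (φ j))) := by
  simp only [misoW, apply_update f' φ j v, sum_update_eq_sum_add_sub,
    show 1 / (L * n) = 1 / (n : ℝ) * (1 / L) by rw [one_div_mul_one_div, mul_comm]]
  module

theorem sum_norm_misoW_update_sub_le {d n : ℕ} {μ L : ℝ} (hμ : 0 < μ) (hμL : μ ≤ L)
    {f : Fin n → EuclideanSpace ℝ (Fin d) → ℝ}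
    {f' : Fin n → EuclideanSpace ℝ (Fin d) → EuclideanSpace ℝ (Fin d)}
    (hgrad : ∀ i x, HasGradientAt (f i) (f' i x) x)
    (hsmooth : ∀ i x y, ‖f' i x - f' i y‖ ≤ L * ‖x - y‖)
    (hsc : ∀ i x y, f i x ≥ f i y + ⟪f' i y, x - y⟫ + μ / 2 * ‖x - y‖ ^ 2)
    (φ : Fin n → EuclideanSpace ℝ (Fin d)) (j : Fin n) :
    ∑ i, ‖misoW d n L f' (update φ j (misoW d n L f' φ)) - update φ j (misoW d n L f' φ) i‖
      ≤ ∑ i, ‖misoW d n L f' φ - φ i‖ - μ / (μ + L) * ‖misoW d n L f' φ - φ j‖ := by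
  set w := misoW d n L f' φ
  have hn : (n : ℝ) ≠ 0 := Nat.cast_ne_zero.2 j.pos.ne'
  have hL : 0 < L := hμ.trans_le hμL
  have hstep : ‖misoW d n L f' (update φ j w) - w‖ ≤ 1 / n * (L / (μ + L) * ‖w - φ j‖) := by
    rw [misoW_update_sub, norm_smul, Real.norm_of_nonneg (by positivity)]
    gcongr
    exact norm_sub_sub_smul_sub_le_of_strongConvex (hgrad j) (hsmooth j) (hsc j) hμ.le hμL
      hL w (φ j)
  calc ∑ i, ‖misoW d n L f' (update φ j w) - update φ j w i‖
      ≤ n * ‖misoW d n L f' (update φ j w) - w‖ + (∑ i, ‖w - φ i‖ - ‖w - φ j‖) := by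
        simpa using sum_norm_sub_update_le φ j w (misoW d n L f' (update φ j w))
    _ ≤ n * (1 / n * (L / (μ + L) * ‖w - φ j‖)) + (∑ i, ‖w - φ i‖ - ‖w - φ j‖) := by gcongr
    _ = ∑ i, ‖w - φ i‖ - μ / (μ + L) * ‖w - φ j‖ := by
        field_simp
        ring

theorem miso_expected_one_step_descent (d n : ℕ) (hn : 1 ≤ n) (μ L : ℝ)
    (hμ : 0 < μ) (hμL : μ ≤ L)
    (f : Fin n → EuclideanSpace ℝ (Fin d) → ℝ)
    (f' : Fin n → EuclideanSpace ℝ (Fin d) → EuclideanSpace ℝ (Fin d))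
    (hgrad : ∀ i x, HasGradientAt (f i) (f' i x) x)
    (hsmooth : ∀ i x y, ‖f' i x - f' i y‖ ≤ L * ‖x - y‖)
    (hsc : ∀ i x y, f i x ≥ f i y + ⟪f' i y, x - y⟫ + μ / 2 * ‖x - y‖ ^ 2)
    (φ : Fin n → EuclideanSpace ℝ (Fin d)) :
    (1 / (n : ℝ)) * ∑ j, ((1 / (n : ℝ)) * ∑ i,
        ‖misoW d n L f' (Function.update φ j (misoW d n L f' φ))
          - Function.update φ j (misoW d n L f' φ) i‖)
      ≤ (1 - μ / ((μ + L) * n)) * ((1 / (n : ℝ)) * ∑ i, ‖misoW d n L f' φ - φ i‖) := by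
  have hn0 : (n : ℝ) ≠ 0 := Nat.cast_ne_zero.2 (by omega)
  have hμL0 : μ + L ≠ 0 := by linarith
  set w := misoW d n L f' φ
  calc (1 / (n : ℝ)) * ∑ j, ((1 / (n : ℝ)) * ∑ i, ‖misoW d n L f' (update φ j w) - update φ j w i‖)
      ≤ 1 / n * ∑ j, (1 / n * (∑ i, ‖w - φ i‖ - μ / (μ + L) * ‖w - φ j‖)) := by
        gcongr with j
        exact sum_norm_misoW_update_sub_le hμ hμL hgrad hsmooth hsc φ j
    _ = (1 - μ / ((μ + L) * n)) * ((1 / (n : ℝ)) * ∑ i, ‖w - φ i‖) := by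
        rw [← mul_sum, sum_sub_distrib, ← mul_sum, sum_const, card_univ, Fintype.card_fin,
          nsmul_eq_mul]
        field_simp
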